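/- arXiv:1711.00580 — 4 statements merged into one kernel-verified Lean document; each statement's English description precedes it below -/
import Mathlib

section
/- If M = B + f·|w⟩⟨w| is a rank-one perturbation of an N×N real matrix B, where w is a unit vector and f a real number, then the singular values of M and B interlace: λ_{j+1}(B) ≥ μ_j(M) ≥ λ_{j-1}(B) for all valid indices j, where singular values are listed in increasing order. -/
open Matrix Module
open scoped RealInnerProductSpace

/-!
For `x ∈ ker (M - B)` we have `‖M x‖ = ‖B x‖`, so the quadratic forms of `MᵀM` and `BᵀB` agree on
a subspace of codimension `r = rank (M - B)`, here `r ≤ 1`. Cut the span of the eigenvectors of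
`BᵀB` with eigenvalue `≤ λ_{i+r}²` down to that subspace and intersect it with the span of the
eigenvectors of `MᵀM` with eigenvalue `≥ μ_i²`: the dimensions force a common nonzero `x`, and then
`μ_i² ‖x‖² ≤ ‖M x‖² = ‖B x‖² ≤ λ_{i+r}² ‖x‖²`. Exchanging `B` and `M` gives the other inequality.
-/

namespace OrthonormalBasis

variable {ι E : Type*} [Fintype ι] [NormedAddCommGroup E] [InnerProductSpace ℝ E]
  (b : OrthonormalBasis ι ℝ E)

lemma inner_eq_zero_of_mem_span_image {K : Set ι} {x : E} (hx : x ∈ Submodule.span ℝ (b '' K))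
    {k : ι} (hk : k ∉ K) : ⟪b k, x⟫ = 0 := by
  have hspan : Submodule.span ℝ (b '' K) ≤ LinearMap.ker (innerₛₗ ℝ (b k)) :=
    Submodule.span_le.mpr <| by
      rintro _ ⟨l, hl, rfl⟩
      exact b.inner_eq_zero (by rintro rfl; exact hk hl)
  exact hspan hx

lemma finrank_span_image (K : Finset ι) :
    finrank ℝ (Submodule.span ℝ (b '' K)) = K.card := by
  rw [Set.image_eq_range, finrank_span_eq_card]
  · simp
  · exact b.orthonormal.linearIndependent.comp _ Subtype.val_injective

variable {b} {T : E →ₗ[ℝ] E} {e : ι → ℝ}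

lemma inner_map_self_eq_sum (hT : ∀ k, T (b k) = e k • b k) (x : E) :
    ⟪x, T x⟫ = ∑ k, e k * ⟪b k, x⟫ ^ 2 := by
  have hTx : T x = ∑ k, (e k * ⟪b k, x⟫) • b k := by
    conv_lhs => rw [← b.sum_repr' x]
    simp only [map_sum, map_smul, hT, smul_smul, mul_comm]
  simp only [hTx, inner_sum, inner_smul_right, real_inner_comm x]
  exact Finset.sum_congr rfl fun k _ => by ring

lemma inner_map_self_le_of_mem_span_image (hT : ∀ k, T (b k) = e k • b k) {K : Set ι} {c : ℝ}
    (hc : ∀ k ∈ K, e k ≤ c) {x : E} (hx : x ∈ Submodule.span ℝ (b '' K)) :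
    ⟪x, T x⟫ ≤ c * ‖x‖ ^ 2 := by
  rw [inner_map_self_eq_sum hT, ← b.sum_sq_inner_right, Finset.mul_sum]
  refine Finset.sum_le_sum fun k _ => ?_
  by_cases hk : k ∈ K
  · exact mul_le_mul_of_nonneg_right (hc k hk) (sq_nonneg _)
  · simp [b.inner_eq_zero_of_mem_span_image hx hk]

lemma le_inner_map_self_of_mem_span_image (hT : ∀ k, T (b k) = e k • b k) {K : Set ι} {c : ℝ}
    (hc : ∀ k ∈ K, c ≤ e k) {x : E} (hx : x ∈ Submodule.span ℝ (b '' K)) :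
    c * ‖x‖ ^ 2 ≤ ⟪x, T x⟫ := by
  rw [inner_map_self_eq_sum hT, ← b.sum_sq_inner_right, Finset.mul_sum]
  refine Finset.sum_le_sum fun k _ => ?_
  by_cases hk : k ∈ K
  · exact mul_le_mul_of_nonneg_right (hc k hk) (sq_nonneg _)
  · simp [b.inner_eq_zero_of_mem_span_image hx hk]

end OrthonormalBasis

theorem le_of_inner_map_self_le_on {ι ι' E : Type*} [Fintype ι] [Fintype ι']
    [NormedAddCommGroup E] [InnerProductSpace ℝ E] [FiniteDimensional ℝ E]
    {T T' : E →ₗ[ℝ] E} {b : OrthonormalBasis ι ℝ E} {b' : OrthonormalBasis ι' ℝ E}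
    {e : ι → ℝ} {e' : ι' → ℝ} (hT : ∀ k, T (b k) = e k • b k) (hT' : ∀ k, T' (b' k) = e' k • b' k)
    {H : Submodule ℝ E} {r : ℕ} (hH : finrank ℝ E ≤ finrank ℝ H + r)
    (hTT' : ∀ x ∈ H, ⟪x, T' x⟫ ≤ ⟪x, T x⟫)
    {K : Finset ι} {K' : Finset ι'} {c c' : ℝ} (hc : ∀ k ∈ K, e k ≤ c) (hc' : ∀ k ∈ K', c' ≤ e' k)
    (hcard : finrank ℝ E + r < K.card + K'.card) : c' ≤ c := by
  have hS : K.card ≤ finrank ℝ ↥(Submodule.span ℝ (b '' K) ⊓ H) + r := by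
    have := Submodule.finrank_sup_add_finrank_inf_eq (Submodule.span ℝ (b '' K)) H
    have := Submodule.finrank_le (Submodule.span ℝ (b '' K) ⊔ H)
    have := b.finrank_span_image K
    omega
  obtain ⟨x, hxS, hxS', hx0⟩ :
      ∃ x ∈ Submodule.span ℝ (b '' K) ⊓ H, x ∈ Submodule.span ℝ (b' '' K') ∧ x ≠ 0 := by
    by_contra! h
    have := Submodule.finrank_add_finrank_le_of_disjoint (Submodule.disjoint_def.mpr h)
    have := b'.finrank_span_image K'
    omega
  have hx : 0 < ‖x‖ ^ 2 := by positivity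
  refine le_of_mul_le_mul_right ?_ hx
  calc c' * ‖x‖ ^ 2 ≤ ⟪x, T' x⟫ := b'.le_inner_map_self_of_mem_span_image hT' hc' hxS'
    _ ≤ ⟪x, T x⟫ := hTT' x hxS.2
    _ ≤ c * ‖x‖ ^ 2 := b.inner_map_self_le_of_mem_span_image hT hc hxS.1

section SortedValues

lemma card_filter_eq_of_map_eq {α κ ι : Type*} [Fintype κ] [Fintype ι] {s : κ → α} {g : ι → α}
    (h : Multiset.map s Finset.univ.val = Multiset.map g Finset.univ.val)
    (p : α → Prop) [DecidablePred p] :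
    (Finset.univ.filter fun k => p (g k)).card = (Finset.univ.filter fun j => p (s j)).card := by
  have := congrArg (Multiset.countP p) h
  rw [Multiset.countP_map, Multiset.countP_map] at this
  exact this.symm

lemma nonneg_of_map_eq_map_sqrt {κ ι : Type*} [Fintype κ] [Fintype ι] {s : κ → ℝ} {e : ι → ℝ}
    (h : Multiset.map s Finset.univ.val = Multiset.map (fun k => √(e k)) Finset.univ.val)
    (k : κ) : 0 ≤ s k := by
  obtain ⟨l, -, hl⟩ :=
    Multiset.mem_map.mp (h ▸ Multiset.mem_map_of_mem s (Finset.mem_univ_val k))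
  exact hl ▸ Real.sqrt_nonneg _

variable {α ι : Type*} [LinearOrder α] [Fintype ι] {N : ℕ} {s : Fin N → α} {g : ι → α}

lemma Monotone.add_one_le_card_filter_le (hs : Monotone s)
    (h : Multiset.map s Finset.univ.val = Multiset.map g Finset.univ.val) (i : Fin N) :
    (i : ℕ) + 1 ≤ (Finset.univ.filter fun k => g k ≤ s i).card := by
  rw [card_filter_eq_of_map_eq h (· ≤ s i), ← Fin.card_Iic]
  exact Finset.card_le_card fun j hj => by simpa using hs (Finset.mem_Iic.mp hj)

lemma Monotone.sub_le_card_filter_ge (hs : Monotone s)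
    (h : Multiset.map s Finset.univ.val = Multiset.map g Finset.univ.val) (i : Fin N) :
    N - i ≤ (Finset.univ.filter fun k => s i ≤ g k).card := by
  rw [card_filter_eq_of_map_eq h (s i ≤ ·), ← Fin.card_Ici]
  exact Finset.card_le_card fun j hj => by simpa using hs (Finset.mem_Ici.mp hj)

end SortedValues

namespace Matrix

variable {𝕜 m n : Type*} [RCLike 𝕜] [Fintype m] [Fintype n] [DecidableEq n]

lemma rank_add_finrank_ker_toEuclideanLin (A : Matrix m n 𝕜) :
    A.rank + finrank 𝕜 (LinearMap.ker (toEuclideanLin A)) = Fintype.card n := by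
  rw [rank_eq_finrank_range_toLin A (PiLp.basisFun 2 𝕜 m) (PiLp.basisFun 2 𝕜 n),
    ← toLpLin_eq_toLin, LinearMap.finrank_range_add_finrank_ker, finrank_euclideanSpace]

lemma IsHermitian.toEuclideanLin_eigenvectorBasis {A : Matrix n n ℝ} (hA : A.IsHermitian)
    (k : n) :
    toEuclideanLin A (hA.eigenvectorBasis k) = hA.eigenvalues k • hA.eigenvectorBasis k := by
  rw [toLpLin_apply, hA.mulVec_eigenvectorBasis]
  rfl

lemma inner_toEuclideanLin_transpose_mul_self [DecidableEq m] (A : Matrix m n ℝ)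
    (x : EuclideanSpace ℝ n) :
    ⟪x, toEuclideanLin (Aᵀ * A) x⟫ = ‖toEuclideanLin A x‖ ^ 2 := by
  rw [toLpLin_mul_same, ← conjTranspose_eq_transpose_of_trivial,
    toEuclideanLin_conjTranspose_eq_adjoint, LinearMap.comp_apply, LinearMap.adjoint_inner_right,
    real_inner_self_eq_norm_sq]

end Matrix

theorem singularValues_le_of_rank_sub_le {N r : ℕ} {B M : Matrix (Fin N) (Fin N) ℝ}
    (hr : (M - B).rank ≤ r) (hB : (Bᵀ * B).IsHermitian) (hMh : (Mᵀ * M).IsHermitian)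
    {lam mu : Fin N → ℝ} (hlam : Monotone lam) (hmu : Monotone mu)
    (hlamvals : Multiset.map lam Finset.univ.val
      = Multiset.map (fun i => Real.sqrt (hB.eigenvalues i)) Finset.univ.val)
    (hmuvals : Multiset.map mu Finset.univ.val
      = Multiset.map (fun i => Real.sqrt (hMh.eigenvalues i)) Finset.univ.val)
    {i j : Fin N} (hij : (i : ℕ) + r = j) : mu i ≤ lam j := by
  have hmu_nonneg := nonneg_of_map_eq_map_sqrt hmuvals i
  have hMev : ∀ k, 0 ≤ hMh.eigenvalues k :=
    (posSemidef_conjTranspose_mul_self M).eigenvalues_nonneg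
  refine le_of_sq_le_sq (le_of_inner_map_self_le_on
    (hB.toEuclideanLin_eigenvectorBasis) (hMh.toEuclideanLin_eigenvectorBasis)
    (H := LinearMap.ker (toEuclideanLin (M - B))) (r := r) ?_ ?_
    (K := Finset.univ.filter fun k => √(hB.eigenvalues k) ≤ lam j)
    (K' := Finset.univ.filter fun k => mu i ≤ √(hMh.eigenvalues k)) ?_ ?_ ?_)
    (nonneg_of_map_eq_map_sqrt hlamvals j)
  · have := (M - B).rank_add_finrank_ker_toEuclideanLin
    rw [finrank_euclideanSpace]
    omega
  · intro x hx
    have hMBx : toEuclideanLin M x = toEuclideanLin B x := by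
      rwa [LinearMap.mem_ker, map_sub, LinearMap.sub_apply, sub_eq_zero] at hx
    rw [inner_toEuclideanLin_transpose_mul_self, inner_toEuclideanLin_transpose_mul_self, hMBx]
  · intro k hk
    exact (Real.sqrt_le_iff.mp (Finset.mem_filter.mp hk).2).2
  · intro k hk
    exact (Real.le_sqrt hmu_nonneg (hMev k)).mp (Finset.mem_filter.mp hk).2
  · have := hlam.add_one_le_card_filter_le hlamvals j
    have := hmu.sub_le_card_filter_ge hmuvals i
    rw [finrank_euclideanSpace, Fintype.card_fin]
    omega

theorem singular_value_interlacing_general {N : ℕ} (B : Matrix (Fin N) (Fin N) ℝ)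
    (w : Fin N → ℝ) (f : ℝ)
    (M : Matrix (Fin N) (Fin N) ℝ)
    (hM : M = B + f • Matrix.of (fun i j => w i * w j))
    (hB : (Bᵀ * B).IsHermitian) (hMh : (Mᵀ * M).IsHermitian)
    (lam mu : Fin N → ℝ) (hlam : Monotone lam) (hmu : Monotone mu)
    (hlamvals : Multiset.map lam Finset.univ.val
      = Multiset.map (fun i => Real.sqrt (hB.eigenvalues i)) Finset.univ.val)
    (hmuvals : Multiset.map mu Finset.univ.val
      = Multiset.map (fun i => Real.sqrt (hMh.eigenvalues i)) Finset.univ.val) :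
    ∀ i j : Fin N, (j : ℕ) = (i : ℕ) + 1 → lam j ≥ mu i ∧ mu j ≥ lam i := by
  have hMB : M - B = vecMulVec (f • w) w := by
    ext; simp [hM, vecMulVec, mul_assoc]
  have hBM : B - M = vecMulVec ((-f) • w) w := by
    ext; simp [hM, vecMulVec, mul_assoc]
  intro i j hij
  exact ⟨singularValues_le_of_rank_sub_le (hMB ▸ rank_vecMulVec_le _ _) hB hMh
      hlam hmu hlamvals hmuvals hij.symm,
    singularValues_le_of_rank_sub_le (hBM ▸ rank_vecMulVec_le _ _) hMh hB
      hmu hlam hmuvals hlamvals hij.symm⟩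

theorem singular_value_interlacing {N : ℕ} (B : Matrix (Fin N) (Fin N) ℝ)
    (w : Fin N → ℝ) (hw : ∑ i, w i ^ 2 = 1) (f : ℝ)
    (M : Matrix (Fin N) (Fin N) ℝ)
    (hM : M = B + f • Matrix.of (fun i j => w i * w j))
    (hB : (Bᵀ * B).IsHermitian) (hMh : (Mᵀ * M).IsHermitian)
    (lam mu : Fin N → ℝ) (hlam : Monotone lam) (hmu : Monotone mu)
    (hlamvals : Multiset.map lam Finset.univ.val
      = Multiset.map (fun i => Real.sqrt (hB.eigenvalues i)) Finset.univ.val)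
    (hmuvals : Multiset.map mu Finset.univ.val
      = Multiset.map (fun i => Real.sqrt (hMh.eigenvalues i)) Finset.univ.val) :
    ∀ i j : Fin N, (j : ℕ) = (i : ℕ) + 1 → lam j ≥ mu i ∧ mu j ≥ lam i :=
  singular_value_interlacing_general B w f M hM hB hMh lam mu hlam hmu hlamvals hmuvals
end

section
/- Let x_1, ..., x_N be distinct real numbers with x_i ≠ -x_k for i ≠ k, and define u_{i,1} = Σ_{k≠i} 1/(x_i - x_k), u_{i,2} = Σ_{k≠i} 1/(x_i - x_k)², ū_{i,1} = Σ_{k≠i} 1/(x_i + x_k), ū_{i,2} = Σ_{k≠i} 1/(x_i + x_k)². Then Σ_i [(u_{i,1} + ū_{i,1})² - u_{i,2} - ū_{i,2}] = 0. -/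
/-!
Write `c i k = 1 / (x i - x k) + 1 / (x i + x k) = 2 x_i / (x_i² - x_k²)`. Expanding the square,
the summand for `i` is `∑_{k ≠ l} c i k * c i l` plus the cross terms `2 / (x_i² - x_k²)`.
The cross terms are antisymmetric in `(i, k)`, so they cancel in the sum over `i`. The triple
sum vanishes because its terms cancel in cyclic triples: with `y = x²`,
`∑_cyc y_i / ((y_i - y_k) (y_i - y_l)) = 0`, the divided difference of the linear function `y`
at three points.
-/

open Finset

variable {ι : Type*}

section TorsionFree

variable {M : Type*} [AddCommGroup M] [IsAddTorsionFree M]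

theorem sum_sum_erase_eq_zero_of_antisymm [Fintype ι] [DecidableEq ι] (f : ι → ι → M)
    (hf : ∀ i k, i ≠ k → f k i = -f i k) : ∑ i, ∑ k ∈ univ.erase i, f i k = 0 := by
  set S := ∑ i, ∑ k ∈ univ.erase i, f i k
  have hneg : S = -S := calc
    S = ∑ k, ∑ i ∈ univ.erase k, f i k := sum_comm' (by simp [eq_comm])
    _ = -S := by
      simp only [S, ← sum_neg_distrib]
      exact sum_congr rfl fun k _ => sum_congr rfl fun i hi => hf k i (ne_of_mem_erase hi).symm
  exact two_nsmul_eq_zero.mp (by rw [two_nsmul]; nth_rw 1 [hneg]; exact neg_add_cancel S)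

theorem sum_sum_sum_eq_zero_of_cyclic [Fintype ι] (g : ι → ι → ι → M)
    (hg : ∀ i k l, g i k l + g k l i + g l i k = 0) : ∑ i, ∑ k, ∑ l, g i k l = 0 := by
  have hrot (h : ι → ι → ι → M) : ∑ i, ∑ k, ∑ l, h k l i = ∑ i, ∑ k, ∑ l, h i k l := by
    rw [sum_comm]; exact sum_congr rfl fun _ _ => sum_comm
  have hrot₁ : ∑ i, ∑ k, ∑ l, g k l i = ∑ i, ∑ k, ∑ l, g i k l := hrot g
  have hrot₂ : ∑ i, ∑ k, ∑ l, g l i k = ∑ i, ∑ k, ∑ l, g i k l := (hrot fun a b c => g c a b).symm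
  have h3 : 3 • ∑ i, ∑ k, ∑ l, g i k l = 0 := calc
    _ = ∑ i, ∑ k, ∑ l, (g i k l + g k l i + g l i k) := by
      simp only [sum_add_distrib, hrot₁, hrot₂]
      abel
    _ = 0 := by simp [hg]
  exact (nsmul_eq_zero_iff_right three_ne_zero).mp h3

theorem sum_sum_erase_sum_erase_eq_zero_of_cyclic [Fintype ι] [DecidableEq ι]
    (g : ι → ι → ι → M)
    (hg : ∀ i k l, i ≠ k → i ≠ l → k ≠ l → g i k l + g k l i + g l i k = 0) :
    ∑ i, ∑ k ∈ univ.erase i, ∑ l ∈ (univ.erase i).erase k, g i k l = 0 := by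
  let g' i k l := if i ≠ k ∧ i ≠ l ∧ k ≠ l then g i k l else 0
  calc _ = ∑ i, ∑ k, ∑ l, g' i k l := by
        simp only [← filter_ne', sum_filter, g']
        refine sum_congr rfl fun i _ => sum_congr rfl fun k _ => ?_
        split_ifs with hki
        · exact sum_congr rfl fun l _ => by grind
        · simp_all
    _ = 0 := sum_sum_sum_eq_zero_of_cyclic g' fun i k l => by
        simp only [g']
        split_ifs <;> grind

end TorsionFree

theorem sq_sum_sub_sum_sq [DecidableEq ι] {R : Type*} [CommRing R] (s : Finset ι) (a : ι → R) :
    (∑ k ∈ s, a k) ^ 2 - ∑ k ∈ s, a k ^ 2 = ∑ k ∈ s, ∑ l ∈ s.erase k, a k * a l := by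
  rw [sq, sum_mul_sum, sub_eq_iff_eq_add', ← sum_add_distrib]
  exact sum_congr rfl fun k hk => by rw [← add_sum_erase s _ hk, sq]

theorem sum_sq_sum_erase_sub_sum_sq_eq_zero [Fintype ι] [DecidableEq ι]
    {R : Type*} [CommRing R] [IsAddTorsionFree R] (c : ι → ι → R)
    (hc : ∀ i k l, i ≠ k → i ≠ l → k ≠ l → c i k * c i l + c k l * c k i + c l i * c l k = 0) :
    ∑ i, ((∑ k ∈ univ.erase i, c i k) ^ 2 - ∑ k ∈ univ.erase i, c i k ^ 2) = 0 := by
  simp only [sq_sum_sub_sum_sq]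
  exact sum_sum_erase_sum_erase_eq_zero_of_cyclic (fun i k l => c i k * c i l) hc

theorem one_div_sub_add_one_div_add_cyclic {K : Type*} [Field K] {a b c : K}
    (hab : a ≠ b) (hac : a ≠ c) (hbc : b ≠ c)
    (hab' : a + b ≠ 0) (hac' : a + c ≠ 0) (hbc' : b + c ≠ 0) :
    (1 / (a - b) + 1 / (a + b)) * (1 / (a - c) + 1 / (a + c))
      + (1 / (b - c) + 1 / (b + c)) * (1 / (b - a) + 1 / (b + a))
      + (1 / (c - a) + 1 / (c + a)) * (1 / (c - b) + 1 / (c + b)) = 0 := by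
  have := sub_ne_zero.2 hab
  have := sub_ne_zero.2 hac
  have := sub_ne_zero.2 hbc
  have := sub_ne_zero.2 hab.symm
  have := sub_ne_zero.2 hac.symm
  have := sub_ne_zero.2 hbc.symm
  have : b + a ≠ 0 := by rwa [add_comm]
  have : c + a ≠ 0 := by rwa [add_comm]
  have : c + b ≠ 0 := by rwa [add_comm]
  field_simp
  ring

theorem sum_u_square_identity {N : ℕ} (x : Fin N → ℝ)
    (hinj : Function.Injective x)
    (hsum : ∀ i k, i ≠ k → x i + x k ≠ 0) :
    ∑ i, (((∑ k ∈ Finset.univ.erase i, 1 / (x i - x k))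
        + ∑ k ∈ Finset.univ.erase i, 1 / (x i + x k)) ^ 2
      - (∑ k ∈ Finset.univ.erase i, 1 / (x i - x k) ^ 2)
      - ∑ k ∈ Finset.univ.erase i, 1 / (x i + x k) ^ 2) = 0 := by
  set c : Fin N → Fin N → ℝ := fun i k => 1 / (x i - x k) + 1 / (x i + x k)
  have hcyc (i k l : Fin N) (hik : i ≠ k) (hil : i ≠ l) (hkl : k ≠ l) :
      c i k * c i l + c k l * c k i + c l i * c l k = 0 :=
    one_div_sub_add_one_div_add_cyclic (hinj.ne hik) (hinj.ne hil) (hinj.ne hkl)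
      (hsum i k hik) (hsum i l hil) (hsum k l hkl)
  set cross : Fin N → Fin N → ℝ := fun i k => 2 * (1 / (x i - x k) * (1 / (x i + x k)))
  have hcross : ∑ i, ∑ k ∈ univ.erase i, cross i k = 0 :=
    sum_sum_erase_eq_zero_of_antisymm cross fun i k _ => by
      simp only [cross, ← neg_sub (x i), add_comm (x k), one_div_neg_eq_neg_one_div]
      ring
  have hsq (i k : Fin N) : c i k ^ 2 = 1 / (x i - x k) ^ 2 + 1 / (x i + x k) ^ 2 + cross i k := by
    simp only [c, cross, ← one_div_pow]
    ring
  calc _ = ∑ i, (((∑ k ∈ univ.erase i, c i k) ^ 2 - ∑ k ∈ univ.erase i, c i k ^ 2)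
          + ∑ k ∈ univ.erase i, cross i k) := by
        refine sum_congr rfl fun i _ => ?_
        simp only [c, hsq, sum_add_distrib]
        ring
    _ = 0 := by
      rw [sum_add_distrib, sum_sq_sum_erase_sub_sum_sq_eq_zero c hcyc, hcross, add_zero]
end

section
/- Let B_{ij} ≥ 0 for all i,j in a finite index set, and let u : [0,T] → ℝ^n be differentiable satisfying u_i'(t) = Σ_j B_{ij}(u_j(t) - u_i(t)) for all i and t. Then max_i u_i(t) is nonincreasing in t, and hence ‖u(t)‖_∞ ≤ ‖u(0)‖_∞ for all t ∈ [0,T]. -/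
/-!
Let `M t = max_i u_i t`. If `u_i t = M t`, every term `B_ij (u_j t - u_i t)` is `≤ 0`, so the
coordinates that realise the maximum have nonpositive derivative, while the others stay strictly
below `M` for a while by continuity. Hence `M` has right Dini derivative `≤ 0` everywhere and is
nonincreasing. Since `-u` solves the same system, `max_i (-u_i)` is nonincreasing too, and
`‖u‖_∞ = max (max_i u_i) (max_i (-u_i))`.
-/

open Set Filter Topology

theorem eventually_lt_add_mul_sub_of_hasDerivAt {g : ℝ → ℝ} {g' c r x : ℝ}
    (hg : HasDerivAt g g' x) (hgc : g x ≤ c) (hg' : g x = c → g' ≤ 0) (hr : 0 < r) :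
    ∀ᶠ z in 𝓝[>] x, g z < c + r * (z - x) := by
  have hright : ∀ᶠ z in 𝓝[>] x, x < z := self_mem_nhdsWithin
  rcases hgc.lt_or_eq with hlt | heq
  · have hbelow : ∀ᶠ z in 𝓝[>] x, g z < c :=
      (hg.continuousAt.eventually_lt continuousAt_const hlt).filter_mono nhdsWithin_le_nhds
    filter_upwards [hbelow, hright] with z hz hxz
    nlinarith
  · have hslope : ∀ᶠ z in 𝓝[>] x, slope g x z < r :=
      hg.hasDerivWithinAt.limsup_slope_le' (lt_irrefl x) ((hg' heq).trans_lt hr)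
    filter_upwards [hslope, hright] with z hz hxz
    rw [slope_def_field, div_lt_iff₀ (sub_pos.2 hxz)] at hz
    linarith

theorem ciSup_abs_eq_max {ι : Type*} [Finite ι] (v : ι → ℝ) :
    ⨆ i, |v i| = max (⨆ i, v i) (⨆ i, -v i) := by
  simp only [abs_eq_max_neg]
  exact ciSup_sup_eq (finite_range _).bddAbove (finite_range _).bddAbove

section FiniteFamily

variable {ι : Type*} [Fintype ι] [Nonempty ι]

theorem continuousOn_ciSup_of_hasDerivAt {f f' : ℝ → ι → ℝ} {s : Set ℝ}
    (hf : ∀ i, ∀ x ∈ s, HasDerivAt (fun t => f t i) (f' x i) x) :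
    ContinuousOn (fun t => ⨆ i, f t i) s := by
  intro x hx
  have hsup : ContinuousAt (fun t => Finset.univ.sup' Finset.univ_nonempty (f t)) x :=
    ContinuousAt.finset_sup'_apply _ fun i _ => (hf i x hx).continuousAt
  simp only [Finset.sup'_univ_eq_ciSup] at hsup
  exact hsup.continuousWithinAt

theorem eventually_slope_ciSup_lt {f f' : ℝ → ι → ℝ} {x r : ℝ}
    (hf : ∀ i, HasDerivAt (fun t => f t i) (f' x i) x)
    (hf' : ∀ i, (∀ j, f x j ≤ f x i) → f' x i ≤ 0) (hr : 0 < r) :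
    ∀ᶠ z in 𝓝[>] x, slope (fun t => ⨆ i, f t i) x z < r := by
  have hbdd : ∀ t, BddAbove (range (f t)) := fun t => (finite_range _).bddAbove
  have hcoord : ∀ i, ∀ᶠ z in 𝓝[>] x, f z i < (⨆ j, f x j) + r * (z - x) := by
    intro i
    refine eventually_lt_add_mul_sub_of_hasDerivAt (hf i) (le_ciSup (hbdd x) i) (fun hmax => ?_) hr
    exact hf' i fun j => hmax ▸ le_ciSup (hbdd x) j
  have hright : ∀ᶠ z in 𝓝[>] x, x < z := self_mem_nhdsWithin
  filter_upwards [eventually_all.2 hcoord, hright] with z hz hxz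
  obtain ⟨j, hj⟩ := exists_eq_ciSup_of_finite (f := f z)
  rw [slope_def_field, div_lt_iff₀ (sub_pos.2 hxz), ← hj]
  linarith [hz j]

theorem antitoneOn_ciSup_of_deriv_nonpos_at_argmax {f f' : ℝ → ι → ℝ} {a b : ℝ}
    (hf : ∀ i, ∀ x ∈ Icc a b, HasDerivAt (fun t => f t i) (f' x i) x)
    (hf' : ∀ i, ∀ x ∈ Ico a b, (∀ j, f x j ≤ f x i) → f' x i ≤ 0) :
    AntitoneOn (fun t => ⨆ i, f t i) (Icc a b) := by
  intro s hs t ht hst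
  have hsub : Icc s t ⊆ Icc a b := Icc_subset_Icc hs.1 ht.2
  have hbound : ∀ x ∈ Icc s t, (⨆ i, f x i) ≤ ⨆ i, f s i :=
    image_le_of_liminf_slope_right_le_deriv_boundary (B' := fun _ => 0)
      (continuousOn_ciSup_of_hasDerivAt fun i x hx => hf i x (hsub hx)) le_rfl
      continuousOn_const (fun x _ => hasDerivWithinAt_const x _ _) fun x hx r hr =>
        (eventually_slope_ciSup_lt (fun i => hf i x (hsub (Ico_subset_Icc_self hx)))
          (fun i => hf' i x (Ico_subset_Ico hs.1 ht.2 hx)) hr).frequently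
  exact hbound t ⟨hst, le_rfl⟩

variable {B : ι → ι → ℝ} {u : ℝ → ι → ℝ} {a b : ℝ}

theorem antitoneOn_ciSup_of_consensus (hB : ∀ i j, 0 ≤ B i j)
    (hu : ∀ i, ∀ t ∈ Icc a b, HasDerivAt (fun s => u s i) (∑ j, B i j * (u t j - u t i)) t) :
    AntitoneOn (fun t => ⨆ i, u t i) (Icc a b) :=
  antitoneOn_ciSup_of_deriv_nonpos_at_argmax hu fun i _ _ hmax =>
    Finset.sum_nonpos fun j _ => mul_nonpos_of_nonneg_of_nonpos (hB i j) (sub_nonpos.2 (hmax j))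

theorem antitoneOn_ciSup_abs_of_consensus (hB : ∀ i j, 0 ≤ B i j)
    (hu : ∀ i, ∀ t ∈ Icc a b, HasDerivAt (fun s => u s i) (∑ j, B i j * (u t j - u t i)) t) :
    AntitoneOn (fun t => ⨆ i, |u t i|) (Icc a b) := by
  have hneg : ∀ i, ∀ t ∈ Icc a b,
      HasDerivAt (fun s => -u s i) (∑ j, B i j * (-u t j - -u t i)) t := by
    intro i t ht
    have hsum : ∑ j, B i j * (-u t j - -u t i) = -∑ j, B i j * (u t j - u t i) := by
      rw [← Finset.sum_neg_distrib]
      exact Finset.sum_congr rfl fun j _ => by ring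
    exact hsum ▸ (hu i t ht).fun_neg
  simp only [ciSup_abs_eq_max]
  exact (antitoneOn_ciSup_of_consensus hB hu).sup (antitoneOn_ciSup_of_consensus hB hneg)

end FiniteFamily

theorem maximum_principle_general {n : ℕ} (hn : 0 < n) (T : ℝ)
    (B : Fin n → Fin n → ℝ) (hB : ∀ i j, 0 ≤ B i j)
    (u : ℝ → Fin n → ℝ)
    (hu : ∀ i, ∀ t ∈ Set.Icc (0 : ℝ) T,
      HasDerivAt (fun s => u s i) (∑ j, B i j * (u t j - u t i)) t) :
    (∀ s t : ℝ, 0 ≤ s → s ≤ t → t ≤ T → (⨆ i, u t i) ≤ ⨆ i, u s i)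
    ∧ (∀ t : ℝ, 0 ≤ t → t ≤ T → (⨆ i, |u t i|) ≤ ⨆ i, |u 0 i|) := by
  have : Nonempty (Fin n) := ⟨⟨0, hn⟩⟩
  exact ⟨fun s t hs hst htT => antitoneOn_ciSup_of_consensus hB hu
      ⟨hs, hst.trans htT⟩ ⟨hs.trans hst, htT⟩ hst,
    fun t ht htT => antitoneOn_ciSup_abs_of_consensus hB hu
      ⟨le_rfl, ht.trans htT⟩ ⟨ht, htT⟩ ht⟩

theorem maximum_principle {n : ℕ} (hn : 0 < n) (T : ℝ) (hT : 0 ≤ T)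
    (B : Fin n → Fin n → ℝ) (hB : ∀ i j, 0 ≤ B i j)
    (u : ℝ → Fin n → ℝ)
    (hu : ∀ i, ∀ t ∈ Set.Icc (0 : ℝ) T,
      HasDerivAt (fun s => u s i) (∑ j, B i j * (u t j - u t i)) t) :
    (∀ s t : ℝ, 0 ≤ s → s ≤ t → t ≤ T → (⨆ i, u t i) ≤ ⨆ i, u s i)
    ∧ (∀ t : ℝ, 0 ≤ t → t ≤ T → (⨆ i, |u t i|) ≤ ⨆ i, |u 0 i|) :=
  maximum_principle_general hn T B hB u hu
end

section
/- Let E > 0, η > 0, and set d₁(x) = |E - x| + η, d₂(x) = |-E - x| + η. Then for all real x, |χ_E(x) - (χ_E ⋆ θ_η)(x)| ≤ C η (2E/(d₁(x)d₂(x)) + χ_E(x)/(d₁(x)+d₂(x))) for some absolute constant C, where χ_E = 1_{(-E,E)} and θ_η(u) = η/(π(u²+η²)). -/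
/-!
The Cauchy smoothing of `χ_E` is `(arctan ((x + E) / η) - arctan ((x - E) / η)) / π`.
Since `(1 + t)² ≤ 2 (1 + t²)`, the function `arctan t + 2 / (1 + t)` decreases on `[0, ∞)`, so
`arctan v - arctan u ≤ 2 (v - u) / ((1 + u) (1 + v))` for `0 ≤ u ≤ v` and, letting
`v → ∞`, `π / 2 - arctan u ≤ 2 / (1 + u)`. Outside `(-E, E)` the error is such a difference,
with `u, v` the distances from `x` to the endpoints; inside it is the sum of the two tails at
those distances.
-/

open Real Set MeasureTheory Filter

noncomputable def cauchyKernel (η u : ℝ) : ℝ := η / (π * (u ^ 2 + η ^ 2))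

lemma hasDerivAt_arctan_div_div_pi {η : ℝ} (hη : η ≠ 0) (u : ℝ) :
    HasDerivAt (fun u => arctan (u / η) / π) (cauchyKernel η u) u := by
  refine (((hasDerivAt_id' u).div_const η).arctan.div_const π).congr_deriv ?_
  unfold cauchyKernel
  field_simp
  ring

lemma continuous_cauchyKernel {η : ℝ} (hη : η ≠ 0) : Continuous (cauchyKernel η) :=
  continuous_const.div (by fun_prop) fun u => by positivity

lemma integral_indicator_Ioo_sub_mul_cauchyKernel {η a b : ℝ} (hη : η ≠ 0) (hab : a ≤ b)
    (x : ℝ) :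
    ∫ u, (Ioo a b).indicator (fun _ => (1 : ℝ)) (x - u) * cauchyKernel η u
      = (arctan ((x - a) / η) - arctan ((x - b) / η)) / π := by
  have hindicator : (fun u => (Ioo a b).indicator (fun _ => (1 : ℝ)) (x - u) * cauchyKernel η u)
      = (Ioo (x - b) (x - a)).indicator (cauchyKernel η) := by
    ext u
    have hmem : x - u ∈ Ioo a b ↔ u ∈ Ioo (x - b) (x - a) := by
      rw [← preimage_const_sub_Ioo, mem_preimage]
    by_cases hu : u ∈ Ioo (x - b) (x - a)
    · rw [indicator_of_mem (hmem.2 hu), indicator_of_mem hu, one_mul]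
    · rw [indicator_of_notMem (mt hmem.1 hu), indicator_of_notMem hu, zero_mul]
  rw [hindicator, integral_indicator measurableSet_Ioo, ← integral_Ioc_eq_integral_Ioo,
    ← intervalIntegral.integral_of_le (by linarith),
    intervalIntegral.integral_eq_sub_of_hasDerivAt
      (fun u _ => hasDerivAt_arctan_div_div_pi hη u)
      ((continuous_cauchyKernel hη).intervalIntegrable _ _)]
  ring

lemma arctan_sub_arctan_le {u v : ℝ} (hu : 0 ≤ u) (huv : u ≤ v) :
    arctan v - arctan u ≤ 2 * (v - u) / ((1 + u) * (1 + v)) := by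
  have hanti : AntitoneOn (fun t => arctan t + 2 / (1 + t)) (Ici 0) := by
    refine antitoneOn_of_hasDerivWithinAt_nonpos (convex_Ici 0)
      (f' := fun t => 1 / (1 + t ^ 2) - 2 / (1 + t) ^ 2) ?_ ?_ ?_
    · exact continuous_arctan.continuousOn.add
        (continuousOn_const.div (by fun_prop) fun t (ht : 0 ≤ t) => by positivity)
    · intro t ht
      rw [interior_Ici] at ht ⊢
      have ht' : 1 + t ≠ 0 := by have : 0 < t := ht; positivity
      refine ((hasDerivAt_arctan t).add ((hasDerivAt_const t (2 : ℝ)).div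
        ((hasDerivAt_id' t).const_add 1) ht')).hasDerivWithinAt.congr_deriv ?_
      ring
    · intro t ht
      rw [interior_Ici] at ht
      have ht : 0 < t := ht
      rw [sub_nonpos, div_le_div_iff₀ (by positivity) (by positivity)]
      nlinarith [sq_nonneg (t - 1)]
  have hu' : 1 + u ≠ 0 := by positivity
  have hv' : 1 + v ≠ 0 := by have := hu.trans huv; positivity
  have hmono : arctan v + 2 / (1 + v) ≤ arctan u + 2 / (1 + u) := hanti hu (hu.trans huv) huv
  rw [show 2 * (v - u) / ((1 + u) * (1 + v)) = 2 / (1 + u) - 2 / (1 + v) by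
    field_simp; ring]
  linarith

lemma pi_div_two_sub_arctan_le {u : ℝ} (hu : 0 ≤ u) : π / 2 - arctan u ≤ 2 / (1 + u) := by
  refine le_of_tendsto (tendsto_nhds_of_tendsto_nhdsWithin tendsto_arctan_atTop |>.sub_const
    (arctan u)) ?_
  filter_upwards [eventually_ge_atTop u] with v huv
  have hv : 0 ≤ v := hu.trans huv
  refine (arctan_sub_arctan_le hu huv).trans ?_
  rw [div_le_div_iff₀ (by positivity) (by positivity)]
  nlinarith

lemma arctan_div_sub_arctan_div_le {η u v : ℝ} (hη : 0 < η) (hu : 0 ≤ u) (huv : u ≤ v) :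
    arctan (v / η) - arctan (u / η) ≤ 2 * η * (v - u) / ((u + η) * (v + η)) := by
  have hv : 0 ≤ v := hu.trans huv
  refine (arctan_sub_arctan_le (by positivity) (by gcongr)).trans_eq ?_
  field_simp
  ring

lemma pi_div_two_sub_arctan_div_le {η u : ℝ} (hη : 0 < η) (hu : 0 ≤ u) :
    π / 2 - arctan (u / η) ≤ 2 * η / (u + η) := by
  refine (pi_div_two_sub_arctan_le (by positivity)).trans_eq ?_
  field_simp
  ring

lemma one_div_add_one_div_le {η a b : ℝ} (hη : 0 < η) (ha : η ≤ a) (hb : η ≤ b) :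
    1 / a + 1 / b ≤ (a + b - 2 * η) / (a * b) + 4 / (a + b) := by
  have ha' : 0 < a := hη.trans_le ha
  have hb' : 0 < b := hη.trans_le hb
  have hsmall : 2 * η / (a * b) ≤ 4 / (a + b) := by
    rw [div_le_div_iff₀ (by positivity) (by positivity)]
    nlinarith [mul_le_mul_of_nonneg_right ha hb'.le, mul_le_mul_of_nonneg_right hb ha'.le]
  calc 1 / a + 1 / b = (a + b - 2 * η) / (a * b) + 2 * η / (a * b) := by field_simp; ring
    _ ≤ (a + b - 2 * η) / (a * b) + 4 / (a + b) := by gcongr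

section Interval

variable {E η x : ℝ}

lemma abs_arctan_sub_arctan_le_of_notMem (hE : 0 ≤ E) (hη : 0 < η) (hx : x ∉ Ioo (-E) E) :
    |arctan ((x + E) / η) - arctan ((x - E) / η)|
      ≤ 2 * η * (2 * E) / ((|E - x| + η) * (|-E - x| + η)) := by
  have hnonneg : 0 ≤ arctan ((x + E) / η) - arctan ((x - E) / η) :=
    sub_nonneg.2 (arctan_strictMono.monotone (by gcongr; linarith))
  rw [abs_of_nonneg hnonneg]
  rcases le_or_gt E x with hright | hleft
  · rw [abs_of_nonpos (by linarith : E - x ≤ 0), abs_of_nonpos (by linarith : -E - x ≤ 0)]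
    convert arctan_div_sub_arctan_div_le hη (by linarith) (by linarith : x - E ≤ x + E)
      using 2 <;> ring
  · have hleft : x ≤ -E := by
      by_contra h
      exact hx ⟨not_le.1 h, hleft⟩
    rw [abs_of_nonneg (by linarith : 0 ≤ E - x), abs_of_nonneg (by linarith : 0 ≤ -E - x),
      show (x + E) / η = -((-E - x) / η) by ring,
      show (x - E) / η = -((E - x) / η) by ring, arctan_neg, arctan_neg]
    have hbound := arctan_div_sub_arctan_div_le hη (by linarith) (by linarith : -E - x ≤ E - x)
    rw [show E - x - (-E - x) = 2 * E by ring, mul_comm (-E - x + η)] at hbound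
    linarith

lemma abs_pi_sub_arctan_sub_arctan_le_of_mem (hη : 0 < η) (hx : x ∈ Ioo (-E) E) :
    |π - (arctan ((x + E) / η) - arctan ((x - E) / η))|
      ≤ 2 * η * ((2 * E) / ((|E - x| + η) * (|-E - x| + η))
        + 4 / ((|E - x| + η) + (|-E - x| + η))) := by
  obtain ⟨hx₁, hx₂⟩ := hx
  have habs : |-E - x| = x + E := by rw [abs_of_nonpos (by linarith)]; ring
  rw [abs_of_nonneg (by linarith : 0 ≤ E - x), habs, show (x - E) / η = -((E - x) / η) by ring,
    arctan_neg]
  have htail₁ := pi_div_two_sub_arctan_div_le hη (by linarith : 0 ≤ E - x)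
  have htail₂ := pi_div_two_sub_arctan_div_le hη (by linarith : 0 ≤ x + E)
  have hlt₁ := arctan_lt_pi_div_two ((E - x) / η)
  have hlt₂ := arctan_lt_pi_div_two ((x + E) / η)
  have hsum := one_div_add_one_div_le hη (by linarith : η ≤ E - x + η)
    (by linarith : η ≤ x + E + η)
  rw [show E - x + η + (x + E + η) - 2 * η = 2 * E by ring] at hsum
  rw [abs_of_nonneg (by linarith)]
  calc π - (arctan ((x + E) / η) - -arctan ((E - x) / η))
      ≤ 2 * η / (E - x + η) + 2 * η / (x + E + η) := by linarith
    _ = 2 * η * (1 / (E - x + η) + 1 / (x + E + η)) := by ring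
    _ ≤ _ := mul_le_mul_of_nonneg_left hsum (by positivity)

lemma abs_pi_mul_indicator_sub_arctan_sub_arctan_le (hE : 0 ≤ E) (hη : 0 < η) (x : ℝ) :
    |π * (Ioo (-E) E).indicator (fun _ => (1 : ℝ)) x
        - (arctan ((x + E) / η) - arctan ((x - E) / η))|
      ≤ 8 * η * (2 * E / ((|E - x| + η) * (|-E - x| + η))
        + (Ioo (-E) E).indicator (fun _ => (1 : ℝ)) x / ((|E - x| + η) + (|-E - x| + η))) := by
  have hterm : 0 ≤ η * (2 * E / ((|E - x| + η) * (|-E - x| + η))) := by positivity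
  by_cases hx : x ∈ Ioo (-E) E
  · rw [indicator_of_mem hx, mul_one]
    refine (abs_pi_sub_arctan_sub_arctan_le_of_mem hη hx).trans ?_
    have hgap : 8 * η * (2 * E / ((|E - x| + η) * (|-E - x| + η))
          + 1 / ((|E - x| + η) + (|-E - x| + η)))
        - 2 * η * (2 * E / ((|E - x| + η) * (|-E - x| + η))
          + 4 / ((|E - x| + η) + (|-E - x| + η)))
        = 6 * (η * (2 * E / ((|E - x| + η) * (|-E - x| + η)))) := by ring
    linarith
  · rw [indicator_of_notMem hx, mul_zero, zero_sub, abs_neg, zero_div, add_zero]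
    refine (abs_arctan_sub_arctan_le_of_notMem hE hη hx).trans ?_
    rw [mul_div_assoc]
    linarith

end Interval

theorem indicator_smoothing_error : ∃ C : ℝ, 0 < C ∧
    ∀ E η : ℝ, 0 < E → 0 < η → ∀ x : ℝ,
    |(Set.Ioo (-E) E).indicator (fun _ => (1 : ℝ)) x
      - ∫ u : ℝ, (Set.Ioo (-E) E).indicator (fun _ => (1 : ℝ)) (x - u)
          * (η / (Real.pi * (u ^ 2 + η ^ 2)))|
    ≤ C * η * (2 * E / ((|E - x| + η) * (|-E - x| + η))
        + (Set.Ioo (-E) E).indicator (fun _ => (1 : ℝ)) x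
            / ((|E - x| + η) + (|-E - x| + η))) := by
  refine ⟨8 / π, by positivity, fun E η hE hη x => ?_⟩
  have hconv := integral_indicator_Ioo_sub_mul_cauchyKernel hη.ne' (neg_le_self hE.le) x
  rw [sub_neg_eq_add] at hconv
  unfold cauchyKernel at hconv
  rw [hconv, show ∀ χ A : ℝ, χ - A / π = (π * χ - A) / π from fun χ A => by field_simp,
    abs_div, abs_of_pos pi_pos, div_le_iff₀ pi_pos]
  refine (abs_pi_mul_indicator_sub_arctan_sub_arctan_le hE.le hη x).trans_eq ?_
  field_simp
end
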